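/- arXiv:gr-qc/9511036 — 2 statements merged into one kernel-verified Lean document; each statement's English description precedes it below -/
import Mathlib

section
/- Let m ≥ 0 and N = (m+1)(m+2). Fix the ordered monomial bases of V_{m+1,m} and V_{m,m+1}, and let M(p) denote the N×N matrix of P_p in these bases; its entries are linear polynomials in the four entries of p. Then there exists a nonzero constant c ∈ ℂ (depending only on m and the chosen bases) such that, as a polynomial identity in the entries of p, det M(p) = c · (p₀₀p₁₁ − p₀₁p₁₀)^{N/2}. (Paper: Lemma 3.2, with p_a p^a = 2 det p.) -/
/-!
Lemma 3.2: with `N = (m+1)(m+2)`, the determinant of the matrix of the symbol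
map `P_p` in the monomial bases of `V_{m+1,m}` and `V_{m,m+1}` equals
`c · (p₀₀p₁₁ − p₀₁p₁₀)^{N/2}` for some nonzero constant `c`, as a polynomial
identity in the entries of `p`.  We work with generic entries, i.e. over the
polynomial ring `R = ℂ[p₀₀, p₀₁, p₁₀, p₁₁]`.
-/

open MvPolynomial

/-- The coefficient ring `R = ℂ[p₀₀, p₀₁, p₁₀, p₁₁]` of generic entries of `p`. -/
abbrev R : Type := MvPolynomial (Fin 2 × Fin 2) ℂ

/-- The generic matrix `p`, whose entries are the variables of `R`. -/
noncomputable def pGen : Matrix (Fin 2) (Fin 2) R := fun A A' => X (A, A')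

/-- `det p = p₀₀p₁₁ − p₀₁p₁₀` as an element of `R`. -/
noncomputable def Dpoly : R := X ((0 : Fin 2), (0 : Fin 2)) * X (1, 1) - X (0, 1) * X (1, 0)

/-- The symbol map `P_p(L) = Σ_{A,A'} p_{AA'} · τ_{A'} · ∂L/∂π_A` with generic
entries, acting on polynomials in `π₀, π₁` (left variables) and `τ₀, τ₁`
(right variables) with coefficients in `R`. -/
noncomputable def Pmap (L : MvPolynomial (Fin 2 ⊕ Fin 2) R) :
    MvPolynomial (Fin 2 ⊕ Fin 2) R :=
  ∑ A : Fin 2, ∑ A' : Fin 2,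
    C (pGen A A') * (X (Sum.inr A') * pderiv (Sum.inl A) L)

/-- The exponent function of the monomial `π₀^{a₀} π₁^{a₁} τ₀^{b₀} τ₁^{b₁}`. -/
noncomputable def expo (a0 a1 b0 b1 : ℕ) : (Fin 2 ⊕ Fin 2) →₀ ℕ :=
  Finsupp.equivFunOnFinite.symm (Sum.elim ![a0, a1] ![b0, b1])

/-- The `N×N` matrix (`N = (m+1)(m+2)`) of `P_p` in the ordered monomial bases:
the column indexed by `(j, j')` corresponds to the basis monomial
`π₀^{j} π₁^{m+1-j} τ₀^{j'} τ₁^{m-j'}` of `V_{m+1,m}`, and the row indexed by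
`(i, i')` to the basis monomial `π₀^{i'} π₁^{m-i'} τ₀^{i} τ₁^{m+1-i}` of
`V_{m,m+1}`.  Its entries are linear polynomials in the entries of `p`. -/
noncomputable def matP (m : ℕ) :
    Matrix (Fin (m + 2) × Fin (m + 1)) (Fin (m + 2) × Fin (m + 1)) R :=
  fun r c =>
    coeff (expo (r.2 : ℕ) (m - (r.2 : ℕ)) (r.1 : ℕ) (m + 1 - (r.1 : ℕ)))
      (Pmap (monomial (expo (c.1 : ℕ) (m + 1 - (c.1 : ℕ)) (c.2 : ℕ) (m - (c.2 : ℕ))) 1))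


/-!
Substituting `π ↦ g π` in the unprimed variables (the algebra map `piSubst g`) intertwines the
symbols: `P₁ ∘ piSubst p = piSubst p ∘ P_p`, so `M(1) · S_{m+1,m}(p) = S_{m,m+1}(p) · M(p)`,
where `M(p) = symbolMatrix m p` and `S_{a,b}(g)` is the matrix of `piSubst g` on `V_{a,b}`.
The function `g ↦ det S_{a,b}(g)` (`substDet a b`) is multiplicative, equals
`(det g)^{(b+1)a(a+1)/2}` on diagonal matrices and is trivial on transvections (conjugating by
`diag(2,1)` squares a transvection), so it equals that power of `det g` everywhere. Comparing
determinants gives `det M(p) = det M(1) · (det p)^{N/2}` for the generic `p`, viewed in the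
fraction field of `ℂ[p₀₀, p₀₁, p₁₀, p₁₁]`; and `det M(1) ≠ 0` because the equations
`M(1) v = 0` are bidiagonal with nonzero coefficients.
-/

namespace SpinorSymbol

open Finsupp Function Matrix Sum

section CoeffMatrix

variable {σ S ι κ ν : Type*} [CommSemiring S]

noncomputable def coeffMatrix (F : MvPolynomial σ S → MvPolynomial σ S) (row : ι → σ →₀ ℕ)
    (col : κ → σ →₀ ℕ) : Matrix ι κ S :=
  Matrix.of fun r c => coeff (row r) (F (monomial (col c) 1))

lemma eq_sum_monomial_of_coeff_ne_zero [Fintype κ] {e : κ → σ →₀ ℕ} (he : Injective e)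
    {q : MvPolynomial σ S} (hq : ∀ d, coeff d q ≠ 0 → d ∈ Set.range e) :
    q = ∑ k, monomial (e k) (coeff (e k) q) := by
  classical
  ext d
  simp only [coeff_sum, coeff_monomial]
  by_cases hd : d ∈ Set.range e
  · obtain ⟨k, rfl⟩ := hd
    rw [Finset.sum_eq_single k (fun k' _ hk' => if_neg (he.ne hk')) (by simp)]
    simp
  · rw [not_imp_comm.mp (hq d) hd, Finset.sum_eq_zero]
    rintro k -
    exact if_neg fun h => hd ⟨k, h⟩

lemma map_monomial_eq_smul {F' : Type*} [FunLike F' (MvPolynomial σ S) (MvPolynomial σ S)]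
    [LinearMapClass F' S (MvPolynomial σ S) (MvPolynomial σ S)] (F : F') (d : σ →₀ ℕ) (a : S) :
    F (monomial d a) = a • F (monomial d 1) := by
  rw [← map_smul, smul_monomial, smul_eq_mul, mul_one]

lemma coeffMatrix_mul [Fintype κ] {F' : Type*} [FunLike F' (MvPolynomial σ S) (MvPolynomial σ S)]
    [LinearMapClass F' S (MvPolynomial σ S) (MvPolynomial σ S)] (F : F')
    (G : MvPolynomial σ S → MvPolynomial σ S) (e₁ : ι → σ →₀ ℕ) {e₂ : κ → σ →₀ ℕ}
    (e₃ : ν → σ →₀ ℕ) (he₂ : Injective e₂)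
    (hG : ∀ c d, coeff d (G (monomial (e₃ c) 1)) ≠ 0 → d ∈ Set.range e₂) :
    coeffMatrix F e₁ e₂ * coeffMatrix G e₂ e₃ = coeffMatrix (F ∘ G) e₁ e₃ := by
  ext r c
  simp only [coeffMatrix, Matrix.mul_apply, of_apply, Function.comp_apply]
  conv_rhs => rw [eq_sum_monomial_of_coeff_ne_zero he₂ (hG c), map_sum, coeff_sum]
  refine Finset.sum_congr rfl fun k _ => ?_
  rw [map_monomial_eq_smul F _ (coeff _ _), coeff_smul, smul_eq_mul, mul_comm]

lemma coeffMatrix_id [DecidableEq κ] {e : κ → σ →₀ ℕ} (he : Injective e) :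
    coeffMatrix id e e = (1 : Matrix κ κ S) := by
  classical
  ext r c
  simp [coeffMatrix, one_apply, coeff_monomial, he.eq_iff, eq_comm]

lemma coeffMatrix_mulVec [Fintype κ] {F' : Type*} [FunLike F' (MvPolynomial σ S) (MvPolynomial σ S)]
    [LinearMapClass F' S (MvPolynomial σ S) (MvPolynomial σ S)] (F : F')
    (row : ι → σ →₀ ℕ) (col : κ → σ →₀ ℕ) (v : κ → S) (r : ι) :
    (coeffMatrix F row col *ᵥ v) r = coeff (row r) (F (∑ c, monomial (col c) (v c))) := by
  simp only [mulVec, dotProduct, coeffMatrix, of_apply, map_sum, coeff_sum]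
  refine Finset.sum_congr rfl fun c _ => ?_
  rw [map_monomial_eq_smul F _ (v c), coeff_smul, smul_eq_mul, mul_comm]

lemma coeff_sum_monomial [Fintype κ] {e : κ → σ →₀ ℕ} (he : Injective e) (v : κ → S) (c : κ) :
    coeff (e c) (∑ k, monomial (e k) (v k)) = v c := by
  classical
  simp [coeff_sum, coeff_monomial, he.eq_iff]

end CoeffMatrix

section Bidegree

@[simp] lemma expo_inl_zero (a₀ a₁ b₀ b₁ : ℕ) : expo a₀ a₁ b₀ b₁ (inl 0) = a₀ := rfl
@[simp] lemma expo_inl_one (a₀ a₁ b₀ b₁ : ℕ) : expo a₀ a₁ b₀ b₁ (inl 1) = a₁ := rfl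
@[simp] lemma expo_inr_zero (a₀ a₁ b₀ b₁ : ℕ) : expo a₀ a₁ b₀ b₁ (inr 0) = b₀ := rfl
@[simp] lemma expo_inr_one (a₀ a₁ b₀ b₁ : ℕ) : expo a₀ a₁ b₀ b₁ (inr 1) = b₁ := rfl

lemma expo_eq_iff {a₀ a₁ b₀ b₁ : ℕ} {d : Fin 2 ⊕ Fin 2 →₀ ℕ} :
    expo a₀ a₁ b₀ b₁ = d ↔ d (inl 0) = a₀ ∧ d (inl 1) = a₁ ∧ d (inr 0) = b₀ ∧ d (inr 1) = b₁ := by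
  simp only [Finsupp.ext_iff, Sum.forall, Fin.forall_fin_two, expo_inl_zero, expo_inl_one,
    expo_inr_zero, expo_inr_one]
  tauto

def bidegWeight : Fin 2 ⊕ Fin 2 → ℕ × ℕ := Sum.elim (fun _ => (1, 0)) (fun _ => (0, 1))

lemma weight_bidegWeight (d : Fin 2 ⊕ Fin 2 →₀ ℕ) :
    weight bidegWeight d = (d (inl 0) + d (inl 1), d (inr 0) + d (inr 1)) := by
  rw [weight_apply, Finsupp.sum_fintype _ _ (by simp), Fintype.sum_sum_type]
  simp [bidegWeight, Fin.sum_univ_two]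

noncomputable def bideg (a b : ℕ) (z : Fin (a + 1) × Fin (b + 1)) : Fin 2 ⊕ Fin 2 →₀ ℕ :=
  expo z.1 (a - z.1) z.2 (b - z.2)

lemma bideg_injective (a b : ℕ) : Injective (bideg a b) := by
  intro z z' h
  have h₀ := DFunLike.congr_fun h (inl 0)
  have h₁ := DFunLike.congr_fun h (inr 0)
  simp only [bideg, expo_inl_zero, expo_inr_zero] at h₀ h₁
  exact Prod.ext (Fin.ext h₀) (Fin.ext h₁)

lemma mem_range_bideg {a b : ℕ} {d : Fin 2 ⊕ Fin 2 →₀ ℕ} :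
    d ∈ Set.range (bideg a b) ↔ weight bidegWeight d = (a, b) := by
  rw [weight_bidegWeight, Prod.ext_iff]
  constructor
  · rintro ⟨z, rfl⟩
    simp only [bideg, expo_inl_zero, expo_inl_one, expo_inr_zero, expo_inr_one]
    omega
  · rintro ⟨ha, hb⟩
    refine ⟨(⟨d (inl 0), by omega⟩, ⟨d (inr 0), by omega⟩), expo_eq_iff.mpr ?_⟩
    simp only [true_and]
    omega

end Bidegree

section Substitution

variable {S : Type*} [CommRing S]

noncomputable def piSubst (g : Matrix (Fin 2) (Fin 2) S) :
    MvPolynomial (Fin 2 ⊕ Fin 2) S →ₐ[S] MvPolynomial (Fin 2 ⊕ Fin 2) S :=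
  aeval (Sum.elim (fun A => ∑ B, C (g A B) * X (inl B)) (X ∘ inr))

@[simp] lemma piSubst_X_inl (g : Matrix (Fin 2) (Fin 2) S) (A : Fin 2) :
    piSubst g (X (inl A)) = ∑ B, C (g A B) * X (inl B) := by
  simp [piSubst]

@[simp] lemma piSubst_X_inr (g : Matrix (Fin 2) (Fin 2) S) (A' : Fin 2) :
    piSubst g (X (inr A')) = X (inr A') := by
  simp [piSubst]

lemma piSubst_one : piSubst (1 : Matrix (Fin 2) (Fin 2) S) = AlgHom.id S _ := by
  ext (A | A') <;> simp [one_apply]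

lemma piSubst_mul (g h : Matrix (Fin 2) (Fin 2) S) :
    piSubst (g * h) = (piSubst h).comp (piSubst g) := by
  refine MvPolynomial.algHom_ext fun v => ?_
  rcases v with A | A'
  · simp [Matrix.mul_apply, Fin.sum_univ_two]
    ring
  · simp

lemma isWeightedHomogeneous_piSubst_monomial (g : Matrix (Fin 2) (Fin 2) S)
    (e : Fin 2 ⊕ Fin 2 →₀ ℕ) :
    IsWeightedHomogeneous bidegWeight (piSubst g (monomial e 1)) (weight bidegWeight e) := by
  rw [piSubst, aeval_monomial, map_one, one_mul, weight_apply]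
  refine IsWeightedHomogeneous.prod _ _ _ fun v _ => IsWeightedHomogeneous.pow ?_ _
  rcases v with A | A'
  · exact IsWeightedHomogeneous.sum _ _ _ fun B _ =>
      (isWeightedHomogeneous_X S bidegWeight (inl B)).C_mul _
  · exact isWeightedHomogeneous_X S bidegWeight (inr A')

lemma piSubst_diagonal_monomial (D : Fin 2 → S) (e : Fin 2 ⊕ Fin 2 →₀ ℕ) :
    piSubst (diagonal D) (monomial e 1) = monomial e (D 0 ^ e (inl 0) * D 1 ^ e (inl 1)) := by
  rw [piSubst, aeval_monomial, map_one, one_mul, monomial_eq,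
    Finsupp.prod_fintype _ _ (by simp), Finsupp.prod_fintype _ _ (by simp)]
  simp only [Fintype.prod_sum_type, Fin.prod_univ_two, elim_inl, elim_inr, Function.comp_apply,
    Fin.sum_univ_two, diagonal_apply_eq, diagonal_apply_ne _ zero_ne_one,
    diagonal_apply_ne _ one_ne_zero, map_zero, zero_mul, add_zero, zero_add, mul_pow, map_mul,
    map_pow]
  ring

end Substitution

section SubstDet

variable {S : Type*} [CommRing S]

lemma mem_range_bideg_of_coeff_piSubst_ne_zero {a b : ℕ} (g : Matrix (Fin 2) (Fin 2) S)
    (c : Fin (a + 1) × Fin (b + 1)) (d : Fin 2 ⊕ Fin 2 →₀ ℕ)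
    (hd : coeff d (piSubst g (monomial (bideg a b c) 1)) ≠ 0) : d ∈ Set.range (bideg a b) := by
  rw [mem_range_bideg, isWeightedHomogeneous_piSubst_monomial g _ hd]
  exact mem_range_bideg.mp ⟨c, rfl⟩

noncomputable def substDet (a b : ℕ) : Matrix (Fin 2) (Fin 2) S →* S where
  toFun g := (coeffMatrix (piSubst g) (bideg a b) (bideg a b)).det
  map_one' := by rw [piSubst_one, AlgHom.coe_id, coeffMatrix_id (bideg_injective a b), det_one]
  map_mul' g h := by
    rw [piSubst_mul, AlgHom.coe_comp, ← coeffMatrix_mul (piSubst h) _ _ _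
      (bideg_injective a b) (mem_range_bideg_of_coeff_piSubst_ne_zero g), det_mul, mul_comm]

lemma prod_range_pow_mul_pow_sub (x y : S) (a : ℕ) :
    ∏ j ∈ Finset.range (a + 1), x ^ j * y ^ (a - j) = (x * y) ^ (a * (a + 1) / 2) := by
  have hsum : ∑ j ∈ Finset.range (a + 1), j = a * (a + 1) / 2 := by
    rw [Finset.sum_range_id, Nat.add_sub_cancel, mul_comm]
  have hrefl : ∑ j ∈ Finset.range (a + 1), (a - j) = ∑ j ∈ Finset.range (a + 1), j := by
    rw [← Finset.sum_range_reflect]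
    exact Finset.sum_congr rfl fun j hj => by simp at hj; omega
  rw [Finset.prod_mul_distrib, Finset.prod_pow_eq_pow_sum, Finset.prod_pow_eq_pow_sum, hrefl,
    hsum, mul_pow]

lemma substDet_diagonal (a b : ℕ) (D : Fin 2 → S) :
    substDet a b (diagonal D) = (D 0 * D 1) ^ ((b + 1) * (a * (a + 1) / 2)) := by
  classical
  have hdiag : coeffMatrix (piSubst (diagonal D)) (bideg a b) (bideg a b)
      = diagonal fun c : Fin (a + 1) × Fin (b + 1) => D 0 ^ (c.1 : ℕ) * D 1 ^ (a - c.1) := by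
    ext r c
    simp only [coeffMatrix, of_apply, piSubst_diagonal_monomial, coeff_monomial,
      (bideg_injective a b).eq_iff, diagonal_apply]
    by_cases h : r = c
    · subst h
      simp [bideg]
    · simp [h, Ne.symm h]
  change (coeffMatrix _ _ _).det = _
  rw [hdiag, det_diagonal, Fintype.prod_prod_type]
  simp only [Finset.prod_const, Finset.card_univ, Fintype.card_fin, Finset.prod_pow]
  rw [Fin.prod_univ_eq_prod_range (fun j => D 0 ^ j * D 1 ^ (a - j)),
    prod_range_pow_mul_pow_sub, ← pow_mul, mul_comm (b + 1)]

variable {K : Type*} [Field K] [NeZero (2 : K)]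

lemma substDet_transvection (a b : ℕ) {i j : Fin 2} (hij : i ≠ j) (c : K) :
    substDet a b (transvection i j c) = 1 := by
  set T := transvection i j c
  set d : Matrix (Fin 2) (Fin 2) K := diagonal fun k => if k = i then 2 else 1
  have hconj : d * T = T * T * d := by
    rw [transvection_mul_transvection_same i j hij]
    ext r s
    simp only [d, T, transvection, diagonal_mul, mul_diagonal, Matrix.add_apply,
      Matrix.single_apply, one_apply]
    by_cases hr : r = i <;> by_cases hs : s = i <;> simp [hr, hs, hij.symm] <;> grind
  have hd : substDet a b d ≠ 0 := by
    rw [substDet_diagonal]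
    refine pow_ne_zero _ ?_
    fin_cases i <;> simp [NeZero.ne]
  have hT : substDet a b T ≠ 0 := by
    refine left_ne_zero_of_mul_eq_one (b := substDet a b (transvection i j (-c))) ?_
    rw [← map_mul, transvection_mul_transvection_same i j hij, add_neg_cancel, transvection_zero,
      map_one]
  have h := congrArg (substDet a b) hconj
  rw [map_mul, map_mul, map_mul, mul_comm] at h
  exact mul_left_cancel₀ hT ((mul_right_cancel₀ hd h).symm.trans (mul_one _).symm)

theorem substDet_eq_det_pow (a b : ℕ) (g : Matrix (Fin 2) (Fin 2) K) :
    substDet a b g = g.det ^ ((b + 1) * (a * (a + 1) / 2)) := by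
  have htransvec (L : List (TransvectionStruct (Fin 2) K)) :
      substDet a b (L.map TransvectionStruct.toMatrix).prod = 1 := by
    rw [map_list_prod, List.map_map]
    exact List.prod_eq_one fun x hx => by
      obtain ⟨t, -, rfl⟩ := List.mem_map.mp hx
      exact substDet_transvection a b t.hij t.c
  obtain ⟨L, L', D, rfl⟩ := Pivot.exists_list_transvec_mul_diagonal_mul_list_transvec g
  simp [htransvec, TransvectionStruct.det_toMatrix_prod, substDet_diagonal, Fin.prod_univ_two]

end SubstDet

section SymbolMap

variable {S : Type*} [CommRing S]

noncomputable def symbol (p : Matrix (Fin 2) (Fin 2) S) :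
    Derivation S (MvPolynomial (Fin 2 ⊕ Fin 2) S) (MvPolynomial (Fin 2 ⊕ Fin 2) S) :=
  ∑ A : Fin 2, ∑ A' : Fin 2, (C (p A A') * X (inr A') : MvPolynomial (Fin 2 ⊕ Fin 2) S) •
    (pderiv (inl A) : Derivation S (MvPolynomial (Fin 2 ⊕ Fin 2) S) _)

lemma symbol_apply (p : Matrix (Fin 2) (Fin 2) S) (L : MvPolynomial (Fin 2 ⊕ Fin 2) S) :
    symbol p L = ∑ A, ∑ A', C (p A A') * (X (inr A') * pderiv (inl A) L) := by
  simp [symbol, mul_assoc]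

@[simp] lemma symbol_X_inl (p : Matrix (Fin 2) (Fin 2) S) (A : Fin 2) :
    symbol p (X (inl A)) = ∑ A', C (p A A') * X (inr A') := by
  fin_cases A <;> simp [symbol_apply, pderiv_X, Pi.single_apply, Fin.sum_univ_two]

@[simp] lemma symbol_X_inr (p : Matrix (Fin 2) (Fin 2) S) (A' : Fin 2) :
    symbol p (X (inr A')) = 0 := by
  simp [symbol_apply, pderiv_X]

lemma symbol_piSubst (q g : Matrix (Fin 2) (Fin 2) S) (L : MvPolynomial (Fin 2 ⊕ Fin 2) S) :
    symbol q (piSubst g L) = piSubst g (symbol (g * q) L) := by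
  have base (v : Fin 2 ⊕ Fin 2) :
      symbol q (piSubst g (X v)) = piSubst g (symbol (g * q) (X v)) := by
    rcases v with A | A'
    · simp [Matrix.mul_apply, Fin.sum_univ_two]
      ring
    · simp
  induction L using MvPolynomial.induction_on with
  | C a =>
    rw [← algebraMap_eq, AlgHom.commutes, Derivation.map_algebraMap, Derivation.map_algebraMap,
      map_zero]
  | add f g hf hg => simp only [map_add, hf, hg]
  | mul_X f v hf => simp only [map_mul, Derivation.leibniz, smul_eq_mul, map_add, hf, base]

lemma coeff_symbol (p : Matrix (Fin 2) (Fin 2) S) (L : MvPolynomial (Fin 2 ⊕ Fin 2) S)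
    (d : Fin 2 ⊕ Fin 2 →₀ ℕ) :
    coeff d (symbol p L) = ∑ A, ∑ A', if d (inr A') = 0 then 0 else
      p A A' * coeff (d - single (inr A') 1 + single (inl A) 1) L * (d (inl A) + 1) := by
  classical
  simp only [symbol_apply, coeff_sum, coeff_C_mul, coeff_X_mul', coeff_pderiv,
    Finsupp.mem_support_iff]
  refine Finset.sum_congr rfl fun A _ => Finset.sum_congr rfl fun A' _ => ?_
  split_ifs <;> simp_all [mul_assoc]

end SymbolMap

section SymbolMatrix

variable {S : Type*} [CommRing S]

lemma isWeightedHomogeneous_symbol {p : Matrix (Fin 2) (Fin 2) S}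
    {L : MvPolynomial (Fin 2 ⊕ Fin 2) S} {a b : ℕ}
    (hL : IsWeightedHomogeneous bidegWeight L (a + 1, b)) :
    IsWeightedHomogeneous bidegWeight (symbol p L) (a, b + 1) := by
  intro d hd
  rw [coeff_symbol] at hd
  obtain ⟨A, -, hA⟩ := Finset.exists_ne_zero_of_sum_ne_zero hd
  obtain ⟨A', -, hA'⟩ := Finset.exists_ne_zero_of_sum_ne_zero hA
  split_ifs at hA' with hd₀
  · exact absurd rfl hA'
  have hw := hL (right_ne_zero_of_mul (left_ne_zero_of_mul hA'))
  rw [weight_bidegWeight, Prod.ext_iff] at hw ⊢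
  fin_cases A <;> fin_cases A' <;> simp at hw hd₀ ⊢ <;> omega

noncomputable def symbolMatrix (m : ℕ) (p : Matrix (Fin 2) (Fin 2) S) :
    Matrix (Fin (m + 2) × Fin (m + 1)) (Fin (m + 2) × Fin (m + 1)) S :=
  coeffMatrix (symbol p) (bideg m (m + 1) ∘ Prod.swap) (bideg (m + 1) m)

lemma matP_eq_symbolMatrix (m : ℕ) : matP m = symbolMatrix m pGen := by
  ext r c
  simp only [matP, symbolMatrix, coeffMatrix, of_apply, symbol_apply]
  rfl

lemma symbolMatrix_map {T : Type*} [CommRing T] (φ : S →+* T) (m : ℕ)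
    (p : Matrix (Fin 2) (Fin 2) S) : (symbolMatrix m p).map φ = symbolMatrix m (p.map φ) := by
  ext r c
  simp [symbolMatrix, coeffMatrix, coeff_symbol, coeff_monomial, apply_ite φ]

lemma mem_range_bideg_swap_of_coeff_symbol_ne_zero {m : ℕ} (p : Matrix (Fin 2) (Fin 2) S)
    (c : Fin (m + 2) × Fin (m + 1)) (d : Fin 2 ⊕ Fin 2 →₀ ℕ)
    (hd : coeff d (symbol p (monomial (bideg (m + 1) m c) 1)) ≠ 0) :
    d ∈ Set.range (bideg m (m + 1) ∘ Prod.swap) := by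
  rw [Prod.swap_surjective.range_comp, mem_range_bideg]
  refine isWeightedHomogeneous_symbol (fun e he => ?_) hd
  classical
  rw [coeff_monomial] at he
  split_ifs at he with h
  · exact h ▸ mem_range_bideg.mp ⟨c, rfl⟩
  · exact absurd rfl he

end SymbolMatrix

section Determinant

variable {S : Type*} [CommRing S]

lemma symbolMatrix_one_mul (m : ℕ) (p : Matrix (Fin 2) (Fin 2) S) :
    symbolMatrix m 1 * coeffMatrix (piSubst p) (bideg (m + 1) m) (bideg (m + 1) m) =
      coeffMatrix (piSubst p) (bideg m (m + 1) ∘ Prod.swap) (bideg m (m + 1) ∘ Prod.swap) *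
        symbolMatrix m p := by
  have hcomm : symbol 1 ∘ piSubst p = piSubst p ∘ symbol p := by
    funext L
    rw [Function.comp_apply, symbol_piSubst, Matrix.mul_one, Function.comp_apply]
  calc _ = coeffMatrix (symbol 1 ∘ piSubst p) (bideg m (m + 1) ∘ Prod.swap) (bideg (m + 1) m) :=
        coeffMatrix_mul (symbol (1 : Matrix (Fin 2) (Fin 2) S)).toLinearMap _ _ _
          (bideg_injective _ _) (mem_range_bideg_of_coeff_piSubst_ne_zero p)
    _ = _ := by
      rw [hcomm]
      exact (coeffMatrix_mul (piSubst p) _ _ _ ((bideg_injective _ _).comp Prod.swap_injective)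
        (mem_range_bideg_swap_of_coeff_symbol_ne_zero p)).symm

lemma det_symbolMatrix_one_mul_substDet (m : ℕ) (p : Matrix (Fin 2) (Fin 2) S) :
    (symbolMatrix m 1).det * substDet (m + 1) m p =
      substDet m (m + 1) p * (symbolMatrix m p).det := by
  have hswap : (coeffMatrix (piSubst p) (bideg m (m + 1) ∘ Prod.swap)
      (bideg m (m + 1) ∘ Prod.swap)).det = substDet m (m + 1) p :=
    det_submatrix_equiv_self (Equiv.prodComm (Fin (m + 2)) (Fin (m + 1)))
      (coeffMatrix (piSubst p) (bideg m (m + 1)) (bideg m (m + 1)))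
  calc _ = (symbolMatrix m 1 * coeffMatrix (piSubst p) (bideg (m + 1) m) (bideg (m + 1) m)).det :=
        (det_mul _ _).symm
    _ = _ := by rw [symbolMatrix_one_mul, det_mul, hswap]

lemma mul_triangle_succ_eq (m : ℕ) :
    (m + 1) * ((m + 1) * (m + 1 + 1) / 2) =
      (m + 1 + 1) * (m * (m + 1) / 2) + (m + 1) * (m + 2) / 2 := by
  obtain ⟨k, hk⟩ := Nat.even_mul_succ_self m
  have h₁ : m * (m + 1) / 2 = k := by omega
  have h₂ : (m + 1) * (m + 2) / 2 = k + m + 1 := by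
    rw [show (m + 1) * (m + 2) = m * (m + 1) + 2 * (m + 1) by ring, hk]
    omega
  rw [h₁, h₂]
  nlinarith [hk]

theorem det_symbolMatrix {K : Type*} [Field K] [NeZero (2 : K)] (m : ℕ)
    {p : Matrix (Fin 2) (Fin 2) K} (hp : p.det ≠ 0) :
    (symbolMatrix m p).det = (symbolMatrix m 1).det * p.det ^ ((m + 1) * (m + 2) / 2) := by
  have h := det_symbolMatrix_one_mul_substDet m p
  rw [substDet_eq_det_pow, substDet_eq_det_pow, mul_triangle_succ_eq, pow_add] at h
  exact (mul_left_cancel₀ (pow_ne_zero _ hp) (by rw [← h]; ring)).symm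

end Determinant

section Injectivity

lemma coeff_symbol_one_expo {S : Type*} [CommRing S] {m i i' : ℕ} (hi : i ≤ m + 1) (hi' : i' ≤ m)
    (L : MvPolynomial (Fin 2 ⊕ Fin 2) S) :
    coeff (expo i' (m - i') i (m + 1 - i)) (symbol 1 L) =
      (if i = 0 then 0 else
        ((i' + 1 : ℕ) : S) * coeff (expo (i' + 1) (m + 1 - (i' + 1)) (i - 1) (m - (i - 1))) L) +
      (if i = m + 1 then 0 else
        ((m + 1 - i' : ℕ) : S) * coeff (expo i' (m + 1 - i') i (m - i)) L) := by
  have e₀ (h : i ≠ 0) : expo i' (m - i') i (m + 1 - i) - single (inr 0) 1 + single (inl 0) 1 =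
      expo (i' + 1) (m + 1 - (i' + 1)) (i - 1) (m - (i - 1)) :=
    (expo_eq_iff.mpr (by simp; omega)).symm
  have e₁ (h : i ≠ m + 1) : expo i' (m - i') i (m + 1 - i) - single (inr 1) 1 + single (inl 1) 1 =
      expo i' (m + 1 - i') i (m - i) :=
    (expo_eq_iff.mpr (by simp; omega)).symm
  rw [coeff_symbol]
  simp only [Fin.sum_univ_two, one_apply_eq, one_apply_ne zero_ne_one, one_apply_ne one_ne_zero,
    expo_inr_zero, expo_inr_one, expo_inl_zero, expo_inl_one, zero_mul, one_mul, ite_self,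
    add_zero, zero_add]
  congr 1
  · by_cases h : i = 0
    · simp [h]
    · rw [if_neg h, if_neg h, e₀ h]
      push_cast
      ring
  · by_cases h : i = m + 1
    · simp [h]
    · rw [if_neg (by omega), if_neg h, e₁ h, show m + 1 - i' = m - i' + 1 by omega]
      push_cast
      ring

variable {K : Type*} [Field K] [CharZero K]

/-- The relations of `M(1) v = 0`, with `u j j'` the coordinate of `v` at `π₀^j τ₀^j'`. Below the
antidiagonal `j + j' = m` they determine `u` by induction on `j'`, above it by induction on
`m - j'`. -/
lemma eq_zero_of_symbol_one_relations {m : ℕ} (u : ℕ → ℕ → K)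
    (h : ∀ i ≤ m + 1, ∀ i' ≤ m,
      (if i = 0 then 0 else ((i' + 1 : ℕ) : K) * u (i' + 1) (i - 1)) +
        (if i = m + 1 then 0 else ((m + 1 - i' : ℕ) : K) * u i' i) = 0)
    {j j' : ℕ} (hj : j ≤ m + 1) (hj' : j' ≤ m) : u j j' = 0 := by
  have cast_ne {n : ℕ} (hn : n ≠ 0) : (n : K) ≠ 0 := Nat.cast_ne_zero.mpr hn
  have lower (j' : ℕ) : ∀ j, j + j' ≤ m → u j j' = 0 := by
    induction j' with
    | zero =>
      intro j hj
      have hrel := h 0 (by omega) j (by omega)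
      rw [if_pos rfl, if_neg (by omega), zero_add] at hrel
      exact (mul_eq_zero.mp hrel).resolve_left (cast_ne (by omega))
    | succ n ih =>
      intro j hj
      have hrel := h (n + 1) (by omega) j (by omega)
      rw [if_neg (by omega), if_neg (by omega), Nat.add_sub_cancel, ih (j + 1) (by omega),
        mul_zero, zero_add] at hrel
      exact (mul_eq_zero.mp hrel).resolve_left (cast_ne (by omega))
  have upper (n : ℕ) : ∀ j j', j' + n = m → j ≤ m + 1 → m + 1 ≤ j + j' → u j j' = 0 := by
    induction n with
    | zero =>
      intro j j' hn hj hjj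
      have hrel := h (m + 1) le_rfl (j - 1) (by omega)
      rw [if_neg (by omega), if_pos rfl, add_zero, Nat.sub_add_cancel (by omega),
        Nat.add_sub_cancel, show m = j' by omega] at hrel
      exact (mul_eq_zero.mp hrel).resolve_left (cast_ne (by omega))
    | succ n ih =>
      intro j j' hn hj hjj
      have hrel := h (j' + 1) (by omega) (j - 1) (by omega)
      rw [if_neg (by omega), if_neg (by omega), Nat.sub_add_cancel (by omega),
        Nat.add_sub_cancel, ih (j - 1) (j' + 1) (by omega) (by omega) (by omega), mul_zero,
        add_zero] at hrel
      exact (mul_eq_zero.mp hrel).resolve_left (cast_ne (by omega))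
  by_cases hjj : j + j' ≤ m
  · exact lower j' j hjj
  · exact upper (m - j') j j' (by omega) hj (by omega)

theorem det_symbolMatrix_one_ne_zero (m : ℕ) :
    (symbolMatrix m (1 : Matrix (Fin 2) (Fin 2) K)).det ≠ 0 := by
  intro h0
  obtain ⟨v, hv0, hv⟩ := exists_mulVec_eq_zero_iff.mpr h0
  refine hv0 (funext fun c => ?_)
  set L := ∑ c, monomial (bideg (m + 1) m c) (v c)
  have hrel (i : ℕ) (hi : i ≤ m + 1) (i' : ℕ) (hi' : i' ≤ m) :
      coeff (expo i' (m - i') i (m + 1 - i)) (symbol 1 L) = 0 :=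
    (coeffMatrix_mulVec (symbol (1 : Matrix (Fin 2) (Fin 2) K)).toLinearMap _ _ v _).symm.trans
      (congrFun hv (⟨i, by omega⟩, ⟨i', by omega⟩))
  rw [← coeff_sum_monomial (bideg_injective (m + 1) m) v c, Pi.zero_apply]
  refine eq_zero_of_symbol_one_relations (fun j j' => coeff (expo j (m + 1 - j) j' (m - j')) L)
    (fun i hi i' hi' => ?_) (Nat.lt_succ_iff.mp c.1.2) (Nat.lt_succ_iff.mp c.2.2)
  exact (coeff_symbol_one_expo hi hi' L).symm.trans (hrel i hi i' hi')

end Injectivity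

end SpinorSymbol

lemma det_pGen : pGen.det = Dpoly := by
  simp [Matrix.det_fin_two, pGen, Dpoly]

lemma Dpoly_ne_zero : Dpoly ≠ 0 := by
  intro h
  have := congrArg (eval fun ij : Fin 2 × Fin 2 => if ij.1 = ij.2 then (1 : ℂ) else 0) h
  simp [Dpoly] at this

open SpinorSymbol in
theorem det_matP_eq (m : ℕ) :
    ∃ c : ℂ, c ≠ 0 ∧
      (matP m).det = C c * Dpoly ^ ((m + 1) * (m + 2) / 2) := by
  set K := FractionRing R
  refine ⟨(symbolMatrix m (1 : Matrix (Fin 2) (Fin 2) ℂ)).det,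
    det_symbolMatrix_one_ne_zero m, IsFractionRing.injective R K ?_⟩
  have hp : (pGen.map (algebraMap R K)).det = algebraMap R K Dpoly := by
    rw [← det_pGen, RingHom.map_det]
    rfl
  have hp₀ : (pGen.map (algebraMap R K)).det ≠ 0 := by
    rw [hp, map_ne_zero_iff _ (IsFractionRing.injective R K)]
    exact Dpoly_ne_zero
  have hone : symbolMatrix m (1 : Matrix (Fin 2) (Fin 2) K) =
      (algebraMap ℂ K).mapMatrix (symbolMatrix m 1) := by
    rw [RingHom.mapMatrix_apply, symbolMatrix_map, Matrix.map_one _ (map_zero _) (map_one _)]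
  calc algebraMap R K (matP m).det = (symbolMatrix m (pGen.map (algebraMap R K))).det := by
        rw [RingHom.map_det, RingHom.mapMatrix_apply, matP_eq_symbolMatrix, symbolMatrix_map]
    _ = (symbolMatrix m 1).det * algebraMap R K Dpoly ^ ((m + 1) * (m + 2) / 2) := by
        rw [det_symbolMatrix m hp₀, hp]
    _ = _ := by
        rw [hone, ← RingHom.map_det, map_mul, map_pow, ← algebraMap_eq,
          IsScalarTower.algebraMap_apply ℂ R K]
end

section
/- Let m ≥ 1 and N = (m+1)(m+2). Work in the polynomial ring R = ℂ[p₀₀, p₀₁, p₁₀, p₁₁] and let M ∈ M_N(R) be the matrix of P_p in fixed ordered monomial bases of V_{m+1,m} and V_{m,m+1}, with entries viewed as elements of R. Then every entry of the adjugate (classical adjoint) matrix of M is divisible in R by D^{m(m+1)/2}, where D = p₀₀p₁₁ − p₀₁p₁₀. (Paper: Lemma 3.4.) -/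
/-!
Lemma 3.4: for `m ≥ 1`, every entry of the adjugate (classical adjoint) of the
matrix of the symbol map `P_p` with generic entries (i.e. over
`R = ℂ[p₀₀, p₀₁, p₁₀, p₁₁]`) is divisible in `R` by `D^{m(m+1)/2}`, where
`D = p₀₀p₁₁ − p₀₁p₁₀`.
-/

open MvPolynomial

/-!
Substituting `τ ↦ q τ` (`subst q`, with matrix `Φ_{a,b}(q) = substMatrix q a b` on `V_{a,b}`)
intertwines the symbols: `subst p ∘ P₁ = P_p ∘ subst p` for `P₁ = τ₀ ∂/∂π₀ + τ₁ ∂/∂π₁`. Hence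
`M Φ_{m+1,m}(p) = Φ_{m,m+1}(p) E`, where the matrix `E` of `P₁` is constant and invertible since
`P₁` is injective on `V_{m+1,m}`. As `subst (adj p) ∘ subst p` is multiplication by `D^b` on
`V_{a,b}`, and the substitution `p ↦ adj p` of `R` fixes the prime `D` and turns `Φ_{a,b}(p)` into
`Φ_{a,b}(adj p)`, the two determinants share `D^{b(a+1)(b+1)}` equally; so
`det M ∼ D^{(m+1)(m+2)/2}`. Finally
`adj M = det M · M⁻¹ = det M · Φ_{m+1,m}(p) E⁻¹ Φ_{m,m+1}(adj p) / D^{m+1}`, and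
`(m+1)(m+2)/2 - (m+1) = m(m+1)/2`.
-/

namespace MvPolynomial

variable {σ τ M R : Type*} [CommSemiring R]

theorem IsWeightedHomogeneous.aeval [AddCommMonoid M]
    {w : σ → M} {w' : τ → M} {g : σ → MvPolynomial τ R}
    (hg : ∀ i, (g i).IsWeightedHomogeneous w' (w i)) {φ : MvPolynomial σ R} {m : M}
    (hφ : φ.IsWeightedHomogeneous w m) : (aeval g φ).IsWeightedHomogeneous w' m := by
  induction hφ using IsWeightedHomogeneous.induction_on with
  | zero => simpa using isWeightedHomogeneous_zero R w' m
  | add p q _ _ hp hq => simpa using hp.add hq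
  | monomial d r hr =>
    rw [aeval_monomial, algebraMap_eq, ← hr, Finsupp.weight_apply]
    exact (IsWeightedHomogeneous.prod _ _ _ fun i _ => (hg i).pow (d i)).C_mul r

end MvPolynomial

theorem Prime.exists_associated_pow_of_map_mul_self_eq_pow {M F : Type*}
    [CommMonoidWithZero M] [IsCancelMulZero M] [FunLike F M M] [MonoidHomClass F M M] {p x : M}
    (hp : Prime p) (σ : F) (hσ : σ p = p) {t : ℕ} (h : σ x * x = p ^ t) :
    ∃ i, 2 * i = t ∧ Associated x (p ^ i) := by
  obtain ⟨i, -, hx⟩ := (dvd_prime_pow hp t).mp (Dvd.intro_left _ h)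
  have hσx : Associated (σ x) (p ^ i) := by simpa [hσ] using hx.map σ
  have hpow : Associated (p ^ t) (p ^ (2 * i)) := by
    rw [← h, two_mul, pow_add]
    exact hσx.mul_mul hx
  refine ⟨i, le_antisymm ?_ ?_, hx⟩
  · exact (pow_dvd_pow_iff hp.ne_zero hp.not_isUnit).mp hpow.symm.dvd
  · exact (pow_dvd_pow_iff hp.ne_zero hp.not_isUnit).mp hpow.dvd

namespace Matrix

variable {ι R : Type*} [Fintype ι] [DecidableEq ι] [CommRing R] [IsDomain R]

theorem dvd_adjugate_apply_of_mul_eq_mul {M A B B' E : Matrix ι ι R} {δ d : R}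
    (hMA : M * A = B * E) (hBB' : B * B' = δ • 1) (hE : IsUnit E.det) (hdet : M.det = δ * d)
    (hM : M.det ≠ 0) (r c : ι) : d ∣ M.adjugate r c := by
  set Y := A * E.adjugate * B'
  have hMY : M * Y = (E.det * δ) • 1 := by
    calc M * Y = B * (E * E.adjugate) * B' := by simp only [Y, ← Matrix.mul_assoc, hMA]
      _ = (E.det * δ) • 1 := by
        rw [mul_adjugate, Matrix.mul_smul, Matrix.mul_one, Matrix.smul_mul, hBB', smul_smul]
  have hY : E.det • M.adjugate = d • Y := by
    have h0 : M * (E.det • M.adjugate - d • Y) = 0 := by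
      rw [Matrix.mul_sub, Matrix.mul_smul, Matrix.mul_smul, mul_adjugate, hMY, hdet, smul_smul,
        smul_smul, sub_eq_zero, mul_comm d, mul_assoc]
    have := congrArg (M.adjugate * ·) h0
    simpa only [← Matrix.mul_assoc, adjugate_mul, Matrix.smul_mul, Matrix.one_mul,
      Matrix.mul_zero, smul_eq_zero, hM, false_or, sub_eq_zero] using this
  have hrc := congrFun (congrFun hY r) c
  simp only [smul_apply, smul_eq_mul] at hrc
  exact hE.dvd_mul_left.mp ⟨Y r c, hrc⟩

end Matrix

namespace Spinor

noncomputable section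

open scoped Matrix

variable {K L : Type*} [CommRing K] [CommRing L]

variable (K) in
abbrev SpinorPoly : Type _ := MvPolynomial (Fin 2 ⊕ Fin 2) K

@[simp] lemma expo_inl_zero (a b c d : ℕ) : expo a b c d (Sum.inl 0) = a := rfl
@[simp] lemma expo_inl_one (a b c d : ℕ) : expo a b c d (Sum.inl 1) = b := rfl
@[simp] lemma expo_inr_zero (a b c d : ℕ) : expo a b c d (Sum.inr 0) = c := rfl
@[simp] lemma expo_inr_one (a b c d : ℕ) : expo a b c d (Sum.inr 1) = d := rfl

lemma expo_ext {e e' : (Fin 2 ⊕ Fin 2) →₀ ℕ} (h0 : e (Sum.inl 0) = e' (Sum.inl 0))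
    (h1 : e (Sum.inl 1) = e' (Sum.inl 1)) (h2 : e (Sum.inr 0) = e' (Sum.inr 0))
    (h3 : e (Sum.inr 1) = e' (Sum.inr 1)) : e = e' := by
  ext v
  rcases v with A | A <;> fin_cases A <;> assumption

lemma expo_add_single_inl_zero (a b c d : ℕ) :
    expo a b c d + Finsupp.single (Sum.inl 0) 1 = expo (a + 1) b c d := by
  apply expo_ext <;> simp

lemma expo_add_single_inl_one (a b c d : ℕ) :
    expo a b c d + Finsupp.single (Sum.inl 1) 1 = expo a (b + 1) c d := by
  apply expo_ext <;> simp

lemma expo_add_single_inr_zero (a b c d : ℕ) :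
    expo a b c d + Finsupp.single (Sum.inr 0) 1 = expo a b (c + 1) d := by
  apply expo_ext <;> simp

lemma expo_add_single_inr_one (a b c d : ℕ) :
    expo a b c d + Finsupp.single (Sum.inr 1) 1 = expo a b c (d + 1) := by
  apply expo_ext <;> simp

lemma monomial_expo (a b c d : ℕ) : (monomial (expo a b c d) 1 : SpinorPoly K) =
    X (Sum.inl 0) ^ a * X (Sum.inl 1) ^ b * X (Sum.inr 0) ^ c * X (Sum.inr 1) ^ d := by
  simp [monomial_eq, Finsupp.prod_fintype, Fintype.prod_sum_type, Fin.prod_univ_two, mul_assoc]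

def bideg : Fin 2 ⊕ Fin 2 → ℕ × ℕ := Sum.elim (fun _ => (1, 0)) fun _ => (0, 1)

lemma weight_bideg_apply (e : (Fin 2 ⊕ Fin 2) →₀ ℕ) : Finsupp.weight bideg e =
    (e (Sum.inl 0) + e (Sum.inl 1), e (Sum.inr 0) + e (Sum.inr 1)) := by
  simp [Finsupp.weight_apply, Finsupp.sum_fintype, bideg, Prod.ext_iff]

variable (K) in
abbrev V (a b : ℕ) : Submodule K (SpinorPoly K) := weightedHomogeneousSubmodule K bideg (a, b)

def basisExp (a b : ℕ) (q : Fin (a + 1) × Fin (b + 1)) : (Fin 2 ⊕ Fin 2) →₀ ℕ :=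
  expo q.1 (a - q.1) q.2 (b - q.2)

lemma basisExp_injective (a b : ℕ) : Function.Injective (basisExp a b) := by
  intro q q' h
  have h0 := DFunLike.congr_fun h (Sum.inl 0)
  have h2 := DFunLike.congr_fun h (Sum.inr 0)
  simp only [basisExp, expo_inl_zero, expo_inr_zero] at h0 h2
  exact Prod.ext (Fin.ext h0) (Fin.ext h2)

lemma weight_basisExp (a b : ℕ) (q : Fin (a + 1) × Fin (b + 1)) :
    Finsupp.weight bideg (basisExp a b q) = (a, b) := by
  have := q.1.isLt; have := q.2.isLt
  simp only [weight_bideg_apply, basisExp, expo_inl_zero, expo_inl_one, expo_inr_zero,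
    expo_inr_one]
  ext <;> simp <;> omega

lemma exists_basisExp_eq {a b : ℕ} {e : (Fin 2 ⊕ Fin 2) →₀ ℕ}
    (h : Finsupp.weight bideg e = (a, b)) : ∃ q, basisExp a b q = e := by
  simp only [weight_bideg_apply, Prod.mk.injEq] at h
  refine ⟨(⟨e (Sum.inl 0), by omega⟩, ⟨e (Sum.inr 0), by omega⟩), expo_ext ?_ ?_ ?_ ?_⟩ <;>
    simp [basisExp] <;> omega

variable {a b a' b' a'' b'' c d : ℕ}

lemma monomial_basisExp_mem (q : Fin (a + 1) × Fin (b + 1)) (r : K) :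
    monomial (basisExp a b q) r ∈ V K a b :=
  isWeightedHomogeneous_monomial _ _ _ (weight_basisExp a b q)

lemma coeff_basisExp_monomial_basisExp (r q : Fin (a + 1) × Fin (b + 1)) :
    coeff (basisExp a b r) (monomial (basisExp a b q) (1 : K)) = (1 : Matrix _ _ K) r q := by
  simp only [coeff_monomial, Matrix.one_apply, (basisExp_injective a b).eq_iff, eq_comm]

lemma coeff_basisExp_sum (v : Fin (a + 1) × Fin (b + 1) → K) (r : Fin (a + 1) × Fin (b + 1)) :
    coeff (basisExp a b r) (∑ q, v q • monomial (basisExp a b q) (1 : K)) = v r := by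
  simp [coeff_sum, coeff_monomial, (basisExp_injective a b).eq_iff]

lemma eq_sum_coeff_basisExp {f : SpinorPoly K} (hf : f ∈ V K a b) :
    f = ∑ q, coeff (basisExp a b q) f • monomial (basisExp a b q) 1 := by
  ext e
  by_cases he : Finsupp.weight bideg e = (a, b)
  · obtain ⟨r, rfl⟩ := exists_basisExp_eq he
    rw [coeff_basisExp_sum]
  · rw [hf.coeff_eq_zero e he, coeff_sum]
    refine (Finset.sum_eq_zero fun q _ => ?_).symm
    rw [coeff_smul, coeff_monomial, if_neg, smul_zero]
    rintro rfl
    exact he (weight_basisExp a b q)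

lemma eq_zero_of_coeff_basisExp_eq_zero {f : SpinorPoly K} (hf : f ∈ V K a b)
    (h : ∀ q, coeff (basisExp a b q) f = 0) : f = 0 := by
  rw [eq_sum_coeff_basisExp hf]
  simp [h]

def coordMatrix (F : SpinorPoly K →ₗ[K] SpinorPoly K) (a b a' b' : ℕ) :
    Matrix (Fin (a' + 1) × Fin (b' + 1)) (Fin (a + 1) × Fin (b + 1)) K :=
  Matrix.of fun r q => coeff (basisExp a' b' r) (F (monomial (basisExp a b q) 1))

theorem coordMatrix_comp {F G : SpinorPoly K →ₗ[K] SpinorPoly K}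
    (hF : ∀ f ∈ V K a b, F f ∈ V K a' b') :
    coordMatrix (G ∘ₗ F) a b a'' b'' =
      coordMatrix G a' b' a'' b'' * coordMatrix F a b a' b' := by
  ext r q
  rw [Matrix.mul_apply, coordMatrix, Matrix.of_apply, LinearMap.comp_apply,
    eq_sum_coeff_basisExp (hF _ (monomial_basisExp_mem q 1))]
  simp [coordMatrix, coeff_sum, mul_comm]

theorem coordMatrix_mulVec (F : SpinorPoly K →ₗ[K] SpinorPoly K)
    (v : Fin (a + 1) × Fin (b + 1) → K) (r : Fin (a' + 1) × Fin (b' + 1)) :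
    (coordMatrix F a b a' b' *ᵥ v) r =
      coeff (basisExp a' b' r) (F (∑ q, v q • monomial (basisExp a b q) 1)) := by
  simp [coordMatrix, Matrix.mulVec, dotProduct, coeff_sum, mul_comm]

theorem coordMatrix_map (φ : K →+* L) {F : SpinorPoly K →ₗ[K] SpinorPoly K}
    {G : SpinorPoly L →ₗ[L] SpinorPoly L} (h : ∀ f, map φ (F f) = G (map φ f)) :
    (coordMatrix F a b a' b').map φ = coordMatrix G a b a' b' := by
  ext r q
  simp [coordMatrix, ← coeff_map, h]

def subst (q : Matrix (Fin 2) (Fin 2) K) : SpinorPoly K →ₐ[K] SpinorPoly K :=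
  aeval (Sum.elim (fun A => X (Sum.inl A)) fun A => ∑ A', C (q A A') * X (Sum.inr A'))

@[simp] lemma subst_X_inl (q : Matrix (Fin 2) (Fin 2) K) (A : Fin 2) :
    subst q (X (Sum.inl A)) = X (Sum.inl A) := by
  simp [subst]

@[simp] lemma subst_X_inr (q : Matrix (Fin 2) (Fin 2) K) (A : Fin 2) :
    subst q (X (Sum.inr A)) = ∑ A', C (q A A') * X (Sum.inr A') := by
  simp [subst]

lemma subst_mem_V (q : Matrix (Fin 2) (Fin 2) K) {f : SpinorPoly K} (hf : f ∈ V K a b) :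
    subst q f ∈ V K a b := by
  refine IsWeightedHomogeneous.aeval (fun v => ?_) hf
  rcases v with A | A
  · exact isWeightedHomogeneous_X K bideg (Sum.inl A)
  · exact IsWeightedHomogeneous.sum _ _ _ fun A' _ =>
      (isWeightedHomogeneous_X K bideg (Sum.inr A')).C_mul _

lemma subst_subst (q q' : Matrix (Fin 2) (Fin 2) K) (f : SpinorPoly K) :
    subst q (subst q' f) = subst (q' * q) f := by
  suffices h : (subst q).comp (subst q') = subst (q' * q) from congrArg (· f) h
  refine algHom_ext fun v => ?_
  rcases v with A | A
  · simp
  · simp [Matrix.mul_apply, Fin.sum_univ_two]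
    ring

lemma subst_smul_one_monomial_basisExp (x : K) (q : Fin (a + 1) × Fin (b + 1)) :
    subst (x • (1 : Matrix (Fin 2) (Fin 2) K)) (monomial (basisExp a b q) 1) =
      x ^ b • monomial (basisExp a b q) 1 := by
  have hX : ∀ A, subst (x • (1 : Matrix (Fin 2) (Fin 2) K)) (X (Sum.inr A)) =
      C x * X (Sum.inr A) := by
    intro A
    fin_cases A <;> simp [Fin.sum_univ_two]
  have hx : x ^ (q.2 : ℕ) * x ^ (b - q.2) = x ^ b := by
    rw [← pow_add, Nat.add_sub_cancel' (Nat.lt_succ_iff.mp q.2.isLt)]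
  simp only [basisExp, monomial_expo, map_mul, map_pow, subst_X_inl, hX, smul_eq_C_mul, ← hx]
  ring

lemma map_subst (φ : K →+* L) (q : Matrix (Fin 2) (Fin 2) K) (f : SpinorPoly K) :
    map φ (subst q f) = subst (q.map φ) (map φ f) := by
  suffices h : (map φ).comp (subst q : SpinorPoly K →+* SpinorPoly K) =
      (subst (q.map φ) : SpinorPoly L →+* SpinorPoly L).comp (map φ) from RingHom.congr_fun h f
  refine ringHom_ext (fun r => by simp) fun v => ?_
  rcases v with A | A <;> simp

def substMatrix (q : Matrix (Fin 2) (Fin 2) K) (a b : ℕ) :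
    Matrix (Fin (a + 1) × Fin (b + 1)) (Fin (a + 1) × Fin (b + 1)) K :=
  coordMatrix (subst q).toLinearMap a b a b

lemma substMatrix_mul (q q' : Matrix (Fin 2) (Fin 2) K) :
    substMatrix q a b * substMatrix q' a b = substMatrix (q' * q) a b := by
  rw [substMatrix, substMatrix, ← coordMatrix_comp fun f hf => subst_mem_V q' hf]
  exact congrArg (coordMatrix · a b a b) (LinearMap.ext (subst_subst q q'))

lemma substMatrix_smul_one (x : K) :
    substMatrix (x • (1 : Matrix (Fin 2) (Fin 2) K)) a b = x ^ b • 1 := by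
  ext r q
  rw [substMatrix, coordMatrix, Matrix.of_apply, AlgHom.toLinearMap_apply,
    subst_smul_one_monomial_basisExp, coeff_smul, coeff_basisExp_monomial_basisExp,
    Matrix.smul_apply]

lemma substMatrix_adjugate_mul (q : Matrix (Fin 2) (Fin 2) K) :
    substMatrix q.adjugate a b * substMatrix q a b = q.det ^ b • 1 := by
  rw [substMatrix_mul, Matrix.mul_adjugate, substMatrix_smul_one]

lemma substMatrix_mul_adjugate (q : Matrix (Fin 2) (Fin 2) K) :
    substMatrix q a b * substMatrix q.adjugate a b = q.det ^ b • 1 := by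
  rw [substMatrix_mul, Matrix.adjugate_mul, substMatrix_smul_one]

lemma substMatrix_map (φ : K →+* L) (q : Matrix (Fin 2) (Fin 2) K) :
    (substMatrix q a b).map φ = substMatrix (q.map φ) a b :=
  coordMatrix_map φ (map_subst φ q)

def symbolMap (q : Matrix (Fin 2) (Fin 2) K) : SpinorPoly K →ₗ[K] SpinorPoly K where
  toFun L := ∑ A : Fin 2, ∑ A' : Fin 2, C (q A A') * (X (Sum.inr A') * pderiv (Sum.inl A) L)
  map_add' f g := by simp only [map_add, mul_add, Finset.sum_add_distrib]
  map_smul' r f := by simp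

lemma symbolMap_eq_sum_subst (q : Matrix (Fin 2) (Fin 2) K) (f : SpinorPoly K) :
    symbolMap q f = ∑ A, subst q (X (Sum.inr A)) * pderiv (Sum.inl A) f := by
  simp [symbolMap, Fin.sum_univ_two]
  ring

lemma pderiv_inl_subst (q : Matrix (Fin 2) (Fin 2) K) (A : Fin 2) (f : SpinorPoly K) :
    pderiv (Sum.inl A) (subst q f) = subst q (pderiv (Sum.inl A) f) := by
  induction f using MvPolynomial.induction_on with
  | C r => simp
  | add f g hf hg => simp [hf, hg]
  | mul_X f v hf =>
    have hv : pderiv (Sum.inl A) (subst q (X v)) = subst q (pderiv (Sum.inl A) (X v)) := by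
      rcases v with B | B <;> simp [pderiv_X, Pi.single_apply, apply_ite (subst q)]
    simp only [map_mul, Derivation.leibniz, smul_eq_mul, map_add, hf, hv]

lemma subst_symbolMap (q r : Matrix (Fin 2) (Fin 2) K) (f : SpinorPoly K) :
    subst q (symbolMap r f) = symbolMap (r * q) (subst q f) := by
  simp only [symbolMap_eq_sum_subst, map_sum, map_mul, subst_subst, pderiv_inl_subst]

lemma symbolMap_mem_V (q : Matrix (Fin 2) (Fin 2) K) {f : SpinorPoly K}
    (hf : f ∈ V K (a + 1) b) : symbolMap q f ∈ V K a (b + 1) := by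
  refine Submodule.sum_mem (V K a (b + 1)) fun A _ => Submodule.sum_mem _ fun A' _ => ?_
  have h := ((isWeightedHomogeneous_X K bideg (Sum.inr A')).mul
    (hf.pderiv (i := Sum.inl A) (n' := (a, b)) rfl)).C_mul (q A A')
  simpa [bideg, add_comm] using h

lemma map_symbolMap (φ : K →+* L) (q : Matrix (Fin 2) (Fin 2) K) (f : SpinorPoly K) :
    map φ (symbolMap q f) = symbolMap (q.map φ) (map φ f) := by
  simp [symbolMap, pderiv_map]

lemma coordMatrix_symbolMap_mul_substMatrix (q : Matrix (Fin 2) (Fin 2) K) :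
    coordMatrix (symbolMap q) (a + 1) b a (b + 1) * substMatrix q (a + 1) b =
      substMatrix q a (b + 1) *
        coordMatrix (symbolMap (1 : Matrix (Fin 2) (Fin 2) K)) (a + 1) b a (b + 1) := by
  rw [substMatrix, substMatrix, ← coordMatrix_comp fun f hf => subst_mem_V q hf,
    ← coordMatrix_comp (a'' := a) (b'' := b + 1) fun f hf => symbolMap_mem_V 1 hf]
  refine congrArg (coordMatrix · (a + 1) b a (b + 1)) (LinearMap.ext fun f => ?_)
  simp [subst_symbolMap]

lemma coeff_X_inr_zero_mul (g : SpinorPoly K) :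
    coeff (expo a b (c + 1) d) (X (Sum.inr 0) * g) = coeff (expo a b c d) g := by
  rw [← expo_add_single_inr_zero, add_comm, coeff_X_mul]

lemma coeff_X_inr_one_mul (g : SpinorPoly K) :
    coeff (expo a b c (d + 1)) (X (Sum.inr 1) * g) = coeff (expo a b c d) g := by
  rw [← expo_add_single_inr_one, add_comm, coeff_X_mul]

lemma coeff_X_inr_zero_mul_of_zero (g : SpinorPoly K) :
    coeff (expo a b 0 d) (X (Sum.inr 0) * g) = 0 := by
  classical
  rw [coeff_X_mul', if_neg (by simp)]

lemma coeff_X_inr_one_mul_of_zero (g : SpinorPoly K) :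
    coeff (expo a b c 0) (X (Sum.inr 1) * g) = 0 := by
  classical
  rw [coeff_X_mul', if_neg (by simp)]

lemma coeff_pderiv_inl_zero (g : SpinorPoly K) :
    coeff (expo a b c d) (pderiv (Sum.inl 0) g) = (a + 1) * coeff (expo (a + 1) b c d) g := by
  rw [coeff_pderiv, expo_add_single_inl_zero, expo_inl_zero, mul_comm]

lemma coeff_pderiv_inl_one (g : SpinorPoly K) :
    coeff (expo a b c d) (pderiv (Sum.inl 1) g) = (b + 1) * coeff (expo a (b + 1) c d) g := by
  rw [coeff_pderiv, expo_add_single_inl_one, expo_inl_one, mul_comm]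

lemma symbolMap_one_apply (f : SpinorPoly K) :
    symbolMap (1 : Matrix (Fin 2) (Fin 2) K) f =
      X (Sum.inr 0) * pderiv (Sum.inl 0) f + X (Sum.inr 1) * pderiv (Sum.inl 1) f := by
  simp [symbolMap, Fin.sum_univ_two]

/-- Comparing coefficients in `τ₀ ∂f/∂π₀ + τ₁ ∂f/∂π₁ = 0` ties the coefficient of `f` at
`(a, b, c, d)` to the one at `(a + 1, b - 1, c - 1, d + 1)` by nonzero factors. Walking down to
`c = 0` (possible while `c < b`), or up to `d = 0` (while `d < a`), ends at an equation with a
single term. -/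
theorem coeff_eq_zero_of_symbolMap_one_eq_zero [IsDomain K] [CharZero K] {f : SpinorPoly K}
    (hf : symbolMap 1 f = 0) (h : c + d < a + b) : coeff (expo a b c d) f = 0 := by
  have cancel : ∀ (n : ℕ) (x : K), ((n : K) + 1) * x = 0 → x = 0 := fun n x hx =>
    (mul_eq_zero.mp hx).resolve_left (Nat.cast_add_one_ne_zero n)
  have row : ∀ e, coeff e (symbolMap 1 f) = 0 := by simp [hf]
  have low : ∀ c a b d, c < b → coeff (expo a b c d) f = 0 := by
    intro c
    induction c with
    | zero =>
      rintro a (_ | b) d hb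
      · omega
      have := row (expo a b 0 (d + 1))
      rw [symbolMap_one_apply, coeff_add, coeff_X_inr_zero_mul_of_zero, coeff_X_inr_one_mul,
        coeff_pderiv_inl_one, zero_add] at this
      exact cancel b _ this
    | succ c ih =>
      rintro a (_ | b) d hb
      · omega
      have := row (expo a b (c + 1) (d + 1))
      rw [symbolMap_one_apply, coeff_add, coeff_X_inr_zero_mul, coeff_X_inr_one_mul,
        coeff_pderiv_inl_zero, coeff_pderiv_inl_one, ih _ _ _ (by omega), mul_zero,
        zero_add] at this
      exact cancel b _ this
  have high : ∀ d a b c, d < a → coeff (expo a b c d) f = 0 := by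
    intro d
    induction d with
    | zero =>
      rintro (_ | a) b c ha
      · omega
      have := row (expo a b (c + 1) 0)
      rw [symbolMap_one_apply, coeff_add, coeff_X_inr_one_mul_of_zero, coeff_X_inr_zero_mul,
        coeff_pderiv_inl_zero, add_zero] at this
      exact cancel a _ this
    | succ d ih =>
      rintro (_ | a) b c ha
      · omega
      have := row (expo a b (c + 1) (d + 1))
      rw [symbolMap_one_apply, coeff_add, coeff_X_inr_zero_mul, coeff_X_inr_one_mul,
        coeff_pderiv_inl_zero, coeff_pderiv_inl_one, ih _ _ _ (by omega), mul_zero,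
        add_zero] at this
      exact cancel a _ this
  rcases lt_or_ge c b with hcb | hbc
  · exact low c a b d hcb
  · exact high d a b c (by omega)

theorem det_coordMatrix_symbolMap_one_ne_zero [IsDomain K] [CharZero K] (m : ℕ) :
    ((coordMatrix (symbolMap (1 : Matrix (Fin 2) (Fin 2) K)) (m + 1) m m (m + 1)).submatrix
      (Equiv.prodComm _ _) id).det ≠ 0 := by
  rw [Ne, ← Matrix.exists_mulVec_eq_zero_iff]
  rintro ⟨v, hv0, hv⟩
  apply hv0
  set f : SpinorPoly K := ∑ q, v q • monomial (basisExp (m + 1) m q) 1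
  have hf : f ∈ V K (m + 1) m :=
    Submodule.sum_mem _ fun q _ => Submodule.smul_mem _ _ (monomial_basisExp_mem q 1)
  have hPf : symbolMap 1 f = 0 :=
    eq_zero_of_coeff_basisExp_eq_zero (symbolMap_mem_V 1 hf) fun r => by
      rw [← coordMatrix_mulVec]
      exact congrFun hv (r.2, r.1)
  funext q
  have := q.1.isLt; have := q.2.isLt
  rw [← coeff_basisExp_sum v q, Pi.zero_apply]
  exact coeff_eq_zero_of_symbolMap_one_eq_zero hPf (by omega)

lemma Dpoly_eq_det : Dpoly = pGen.det := by
  simp [Matrix.det_fin_two, pGen, Dpoly]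

theorem prime_Dpoly : Prime Dpoly := by
  let e : R ≃ₐ[ℂ] Polynomial (MvPolynomial (Fin 3) ℂ) :=
    (renameEquiv ℂ finProdFinEquiv).trans (finSuccEquiv ℂ 3)
  have he : e Dpoly = Polynomial.C (X 2) * Polynomial.X + Polynomial.C (-(X 0 * X 1)) := by
    simp only [e, Dpoly, AlgEquiv.trans_apply, renameEquiv_apply, map_sub, map_mul, rename_X]
    rw [show finProdFinEquiv ((0 : Fin 2), (0 : Fin 2)) = 0 from rfl,
      show finProdFinEquiv ((0 : Fin 2), (1 : Fin 2)) = (0 : Fin 3).succ from rfl,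
      show finProdFinEquiv ((1 : Fin 2), (0 : Fin 2)) = (1 : Fin 3).succ from rfl,
      show finProdFinEquiv ((1 : Fin 2), (1 : Fin 2)) = (2 : Fin 3).succ from rfl]
    simp only [finSuccEquiv_X_zero, finSuccEquiv_X_succ, map_neg, map_mul]
    ring
  have hX : Prime (X 2 : MvPolynomial (Fin 3) ℂ) := X_prime
  have hrel : IsRelPrime (X 2 : MvPolynomial (Fin 3) ℂ) (-(X 0 * X 1)) := by
    refine hX.irreducible.isRelPrime_iff_not_dvd.mpr fun hdvd => ?_
    rcases hX.dvd_or_dvd (dvd_neg.mp hdvd) with h | h <;> simp [X_dvd_X] at h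
  rw [← UniqueFactorizationMonoid.irreducible_iff_prime, ← MulEquiv.irreducible_iff e.toMulEquiv]
  exact he ▸ Polynomial.irreducible_C_mul_X_add_C (X_ne_zero 2) hrel

def adjSubst : R →ₐ[ℂ] R := aeval fun i => pGen.adjugate i.1 i.2

lemma pGen_map_adjSubst : pGen.map adjSubst = pGen.adjugate := by
  ext A A'
  simp [adjSubst, pGen]

lemma adjSubst_Dpoly : adjSubst Dpoly = Dpoly := by
  rw [Dpoly_eq_det, AlgHom.map_det, AlgHom.mapMatrix_apply, pGen_map_adjSubst,
    Matrix.det_adjugate, Fintype.card_fin, pow_one]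

theorem exists_associated_det_substMatrix_pGen (a b : ℕ) :
    ∃ i, 2 * i = b * ((a + 1) * (b + 1)) ∧
      Associated (substMatrix pGen a b).det (Dpoly ^ i) := by
  refine prime_Dpoly.exists_associated_pow_of_map_mul_self_eq_pow adjSubst adjSubst_Dpoly ?_
  rw [AlgHom.map_det, AlgHom.mapMatrix_apply, ← AlgHom.coe_toRingHom, substMatrix_map,
    AlgHom.coe_toRingHom, pGen_map_adjSubst, ← Matrix.det_mul, substMatrix_adjugate_mul,
    ← Dpoly_eq_det, Matrix.det_smul, Matrix.det_one, mul_one, ← pow_mul, Fintype.card_prod,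
    Fintype.card_fin, Fintype.card_fin]

section

variable (m : ℕ)

local notation "σ" => Equiv.prodComm (Fin (m + 2)) (Fin (m + 1))

lemma matP_eq : matP m = (coordMatrix (symbolMap pGen) (m + 1) m m (m + 1)).submatrix σ id :=
  rfl

lemma matP_mul_substMatrix :
    matP m * substMatrix pGen (m + 1) m =
      (substMatrix pGen m (m + 1)).submatrix σ σ *
        (coordMatrix (symbolMap 1) (m + 1) m m (m + 1)).submatrix σ id := by
  rw [matP_eq, Matrix.submatrix_mul_equiv, ← coordMatrix_symbolMap_mul_substMatrix,
    Matrix.submatrix_mul _ _ _ id _ Function.bijective_id, Matrix.submatrix_id_id]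

lemma submatrix_substMatrix_mul_adjugate :
    (substMatrix pGen m (m + 1)).submatrix σ σ *
      (substMatrix pGen.adjugate m (m + 1)).submatrix σ σ = Dpoly ^ (m + 1) • 1 := by
  rw [Matrix.submatrix_mul_equiv, substMatrix_mul_adjugate, ← Dpoly_eq_det]
  exact congrArg (Dpoly ^ (m + 1) • ·) (Matrix.submatrix_one_equiv (α := R) σ)

lemma isUnit_det_coordMatrix_symbolMap_one :
    IsUnit ((coordMatrix (symbolMap (1 : Matrix (Fin 2) (Fin 2) R)) (m + 1) m m (m + 1)).submatrix
      σ id).det := by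
  have hmap := coordMatrix_map (C : ℂ →+* R) (a := m + 1) (b := m) (a' := m) (b' := m + 1)
    (map_symbolMap C 1)
  rw [Matrix.map_one _ (map_zero C) (map_one C)] at hmap
  rw [← hmap, Matrix.submatrix_map, ← RingHom.mapMatrix_apply, ← RingHom.map_det]
  exact (isUnit_iff_ne_zero.mpr (det_coordMatrix_symbolMap_one_ne_zero m)).map C

theorem associated_det_matP :
    Associated (Dpoly ^ (m + 1) * Dpoly ^ (m * (m + 1) / 2)) (matP m).det := by
  obtain ⟨i, hi, hA⟩ := exists_associated_det_substMatrix_pGen (m + 1) m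
  obtain ⟨j, hj, hB⟩ := exists_associated_det_substMatrix_pGen m (m + 1)
  have hk : 2 * (m * (m + 1) / 2) = m * (m + 1) :=
    Nat.two_mul_div_two_of_even (Nat.even_mul_succ_self m)
  have hji : j = i + (m + 1) + m * (m + 1) / 2 := by
    have : 2 * j = 2 * i + 2 * (m + 1) + 2 * (m * (m + 1) / 2) := by
      rw [hj, hi, hk]
      ring
    omega
  have hdet := congrArg Matrix.det (matP_mul_substMatrix m)
  rw [Matrix.det_mul, Matrix.det_mul, Matrix.det_submatrix_equiv_self] at hdet
  have hE := associated_one_iff_isUnit.mpr (isUnit_det_coordMatrix_symbolMap_one m)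
  have hMA : Associated ((matP m).det * (substMatrix pGen (m + 1) m).det)
      ((matP m).det * Dpoly ^ i) := (Associated.refl _).mul_mul hA
  rw [hdet] at hMA
  have h : Associated ((matP m).det * Dpoly ^ i) (Dpoly ^ j * 1) := hMA.symm.trans (hB.mul_mul hE)
  rw [mul_one, hji, pow_add, pow_add, mul_assoc, mul_comm (Dpoly ^ i)] at h
  exact (h.of_mul_right (Associated.refl _) (pow_ne_zero _ prime_Dpoly.ne_zero)).symm

end

end

end Spinor

theorem dvd_adjugate_matP_general (m : ℕ) :
    ∀ r c, Dpoly ^ (m * (m + 1) / 2) ∣ (matP m).adjugate r c := by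
  intro r c
  obtain ⟨u, hu⟩ := Spinor.associated_det_matP m
  have hdet : (matP m).det = Dpoly ^ (m + 1) * (Dpoly ^ (m * (m + 1) / 2) * u) := by
    rw [← hu, mul_assoc]
  have hD := Spinor.prime_Dpoly.ne_zero
  have hM : (matP m).det ≠ 0 := by
    rw [hdet]
    exact mul_ne_zero (pow_ne_zero _ hD) (mul_ne_zero (pow_ne_zero _ hD) u.ne_zero)
  exact (Dvd.intro _ rfl).trans <| Matrix.dvd_adjugate_apply_of_mul_eq_mul
    (Spinor.matP_mul_substMatrix m) (Spinor.submatrix_substMatrix_mul_adjugate m)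
    (Spinor.isUnit_det_coordMatrix_symbolMap_one m) hdet hM r c

theorem dvd_adjugate_matP (m : ℕ) (hm : 1 ≤ m) :
    ∀ r c, Dpoly ^ (m * (m + 1) / 2) ∣ (matP m).adjugate r c :=
  dvd_adjugate_matP_general m
end
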